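/- arXiv:1609.02383 — 2 statements merged into one kernel-verified Lean document; each statement's English description precedes it below -/
import Mathlib

section
/- Let Ω ⊆ ℝ^n be a convex set, T ≥ 1, and β_1, …, β_T ≥ 0. Let f_1, …, f_T : ℝ^n → ℝ, x_1, …, x_{T+1} ∈ Ω, and g_1, …, g_T ∈ ℝ^n. Define the matrices h_0 := I and h_t := β_t·g_t g_tᵀ for t ≥ 1, and let h_{0:t} := h_0 + h_1 + ⋯ + h_t. Suppose for each t ∈ [T]: (i) f_t(y) ≥ f_t(x_t) + ⟨g_t, y − x_t⟩ + β_t·(⟨g_t, y − x_t⟩)² for all y ∈ Ω (β_t-convexity at x_t); (ii) x_{t+1} is a minimizer over Ω of x ↦ ⟨g_t, x⟩ + (x − x_t)ᵀ h_{0:t} (x − x_t). Then for every x* ∈ Ω, ∑_{t=1}^T (f_t(x_t) − f_t(x*)) ≤ (1/4)·∑_{t=1}^T g_tᵀ (h_{0:t})⁻¹ g_t + ‖x* − x_1‖₂². -/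
/-!
Write `H t = h_{0:t}` and `‖v‖²_H = vᵀ H v`. By `β_t`-convexity, `f_t(x_t) - f_t(x*)` is at
most `⟨g_t, x_t - x*⟩ - β_t ⟨g_t, x* - x_t⟩²`. The three-point property of the proximal step
bounds `⟨g_t, x_{t+1} - x*⟩` by
`‖x* - x_t‖²_{H t} - ‖x* - x_{t+1}‖²_{H t} - ‖x_{t+1} - x_t‖²_{H t}`, and completing the
square gives `⟨g_t, x_t - x_{t+1}⟩ - ‖x_{t+1} - x_t‖²_{H t} ≤ ¼ g_tᵀ (H t)⁻¹ g_t`. Since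
`‖v‖²_{H t} - β_t ⟨g_t, v⟩² = ‖v‖²_{H (t-1)}`, the potentials `‖x* - x_{t+1}‖²_{H t}`
telescope, from `‖x* - x_1‖²` down to a nonnegative last term.
-/

open scoped RealInnerProductSpace
open Finset

noncomputable def quadForm {n : ℕ} (Q : Matrix (Fin n) (Fin n) ℝ)
    (x : EuclideanSpace ℝ (Fin n)) : ℝ :=
  ∑ i, ∑ j, x i * Q i j * x j

noncomputable def outer {n : ℕ} (v : EuclideanSpace ℝ (Fin n)) :
    Matrix (Fin n) (Fin n) ℝ :=
  Matrix.vecMulVec (fun i => v i) (fun i => v i)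

open scoped Matrix
open Filter Topology

theorem nonneg_of_forall_mul_add_sq_mul_nonneg {a b : ℝ}
    (h : ∀ c : ℝ, 0 < c → c ≤ 1 → 0 ≤ c * a + c ^ 2 * b) : 0 ≤ a := by
  have hlim : Tendsto (fun c : ℝ => a + c * b) (𝓝[>] 0) (𝓝 a) := by
    have : Tendsto (fun c : ℝ => a + c * b) (𝓝 0) (𝓝 (a + 0 * b)) :=
      tendsto_const_nhds.add (tendsto_id.mul_const b)
    simpa using this.mono_left nhdsWithin_le_nhds
  refine ge_of_tendsto hlim ?_
  filter_upwards [Ioc_mem_nhdsGT one_pos] with c ⟨hc0, hc1⟩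
  refine nonneg_of_mul_nonneg_right ?_ hc0
  linarith [h c hc0 hc1]

theorem sum_Icc_add_le_sum_Icc_add {a b D : ℕ → ℝ} {T : ℕ}
    (h : ∀ t < T, a (t + 1) + D (t + 1) ≤ b (t + 1) + D t) :
    ∑ t ∈ Icc 1 T, a t + D T ≤ ∑ t ∈ Icc 1 T, b t + D 0 := by
  induction T with
  | zero => simp
  | succ T ih =>
    rw [sum_Icc_succ_top (Nat.le_add_left 1 T), sum_Icc_succ_top (Nat.le_add_left 1 T)]
    linarith [ih fun t ht => h t (ht.trans (Nat.lt_succ_self T)), h T (Nat.lt_succ_self T)]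

namespace QuadraticMap

variable {E : Type*} [AddCommGroup E] [Module ℝ E]

theorem map_add_smul (q : QuadraticForm ℝ E) (u d : E) (c : ℝ) :
    q (u + c • d) = q u + c * polar q u d + c ^ 2 * q d := by
  have h := polar_smul_right q c u d
  rw [polar, QuadraticMap.map_smul, smul_eq_mul, smul_eq_mul] at h
  linarith

-- Three-point property: minimality along the segment `[x', y]` makes the coefficient of `c`
-- in the exact expansion `hexpand` nonnegative.
theorem add_le_of_isMinOn {Ω : Set E} (hΩ : Convex ℝ Ω) (ℓ : E →ₗ[ℝ] ℝ)
    (q : QuadraticForm ℝ E) {x x' y : E} (hx' : x' ∈ Ω) (hy : y ∈ Ω)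
    (hmin : IsMinOn (fun z => ℓ z + q (z - x)) Ω x') :
    ℓ x' + q (x' - x) + q (y - x') ≤ ℓ y + q (y - x) := by
  have hexpand : ∀ c : ℝ, ℓ (x' + c • (y - x')) + q (x' + c • (y - x') - x) =
      ℓ x' + q (x' - x) + c * (ℓ (y - x') + polar q (x' - x) (y - x'))
        + c ^ 2 * q (y - x') := by
    intro c
    rw [add_sub_right_comm, map_add_smul, map_add, map_smul, smul_eq_mul]
    ring
  have hslope : 0 ≤ ℓ (y - x') + polar q (x' - x) (y - x') := by
    refine nonneg_of_forall_mul_add_sq_mul_nonneg (b := q (y - x')) fun c hc0 hc1 => ?_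
    have := isMinOn_iff.mp hmin _ (hΩ.add_smul_sub_mem hx' hy ⟨hc0.le, hc1⟩)
    simp only [hexpand] at this
    linarith
  have := hexpand 1
  simp only [one_smul, add_sub_cancel, one_mul, one_pow] at this
  linarith

end QuadraticMap

theorem Matrix.PosDef.dotProduct_sub_le {ι : Type*} [Fintype ι] [DecidableEq ι]
    {H : Matrix ι ι ℝ} (hH : H.PosDef) (g u : ι → ℝ) :
    u ⬝ᵥ g - u ⬝ᵥ H *ᵥ u ≤ (1 / 4) * (g ⬝ᵥ H⁻¹ *ᵥ g) := by
  set w := H⁻¹ *ᵥ g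
  have hHw : H *ᵥ w = g := by
    rw [mulVec_mulVec, mul_nonsing_inv _ ((isUnit_iff_isUnit_det H).mp hH.isUnit), one_mulVec]
  have hsymm : ∀ v, w ⬝ᵥ H *ᵥ v = v ⬝ᵥ g := fun v => by
    rw [dotProduct_mulVec, ← mulVec_transpose, ← conjTranspose_eq_transpose_of_trivial,
      hH.isHermitian.eq, hHw, dotProduct_comm]
  -- complete the square around `H⁻¹ g / 2`
  have hsq := hH.posSemidef.dotProduct_mulVec_nonneg (u - (1 / 2 : ℝ) • w)
  simp only [star_trivial, mulVec_sub, mulVec_smul, hHw, sub_dotProduct, dotProduct_sub,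
    smul_dotProduct, dotProduct_smul, hsymm, smul_eq_mul] at hsq
  linarith [dotProduct_comm w g]

section quadForm

variable {n : ℕ}

theorem quadForm_eq_dotProduct (Q : Matrix (Fin n) (Fin n) ℝ)
    (v : EuclideanSpace ℝ (Fin n)) :
    quadForm Q v = v.ofLp ⬝ᵥ Q *ᵥ v.ofLp := by
  simp [quadForm, dotProduct, Matrix.mulVec, mul_sum, mul_assoc]

theorem inner_eq_dotProduct (g v : EuclideanSpace ℝ (Fin n)) : ⟪g, v⟫ = v.ofLp ⬝ᵥ g.ofLp := by
  simp [EuclideanSpace.inner_eq_star_dotProduct]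

theorem quadForm_neg (Q : Matrix (Fin n) (Fin n) ℝ) (v : EuclideanSpace ℝ (Fin n)) :
    quadForm Q (-v) = quadForm Q v := by
  simp [quadForm_eq_dotProduct, Matrix.mulVec_neg]

theorem quadForm_add_left (A B : Matrix (Fin n) (Fin n) ℝ) (v : EuclideanSpace ℝ (Fin n)) :
    quadForm (A + B) v = quadForm A v + quadForm B v := by
  simp [quadForm_eq_dotProduct, Matrix.add_mulVec]

theorem quadForm_one (v : EuclideanSpace ℝ (Fin n)) : quadForm 1 v = ‖v‖ ^ 2 := by
  rw [quadForm_eq_dotProduct, ← real_inner_self_eq_norm_sq, inner_eq_dotProduct,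
    Matrix.one_mulVec]

theorem quadForm_smul_outer (c : ℝ) (w v : EuclideanSpace ℝ (Fin n)) :
    quadForm (c • outer w) v = c * ⟪w, v⟫ ^ 2 := by
  simp only [outer, quadForm_eq_dotProduct, inner_eq_dotProduct, Matrix.smul_mulVec,
    Matrix.vecMulVec_mulVec, op_smul_eq_smul, dotProduct_smul, smul_eq_mul]
  rw [dotProduct_comm v.ofLp]
  ring

theorem posSemidef_outer (v : EuclideanSpace ℝ (Fin n)) : (outer v).PosSemidef := by
  simpa [outer] using Matrix.posSemidef_vecMulVec_self_star v.ofLp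

theorem quadForm_nonneg {Q : Matrix (Fin n) (Fin n) ℝ} (hQ : Q.PosSemidef)
    (v : EuclideanSpace ℝ (Fin n)) : 0 ≤ quadForm Q v := by
  simpa [quadForm_eq_dotProduct] using hQ.dotProduct_mulVec_nonneg v.ofLp

theorem Matrix.PosDef.inner_sub_quadForm_le {H : Matrix (Fin n) (Fin n) ℝ} (hH : H.PosDef)
    (g u : EuclideanSpace ℝ (Fin n)) : ⟪g, u⟫ - quadForm H u ≤ (1 / 4) * quadForm H⁻¹ g := by
  simpa only [inner_eq_dotProduct, quadForm_eq_dotProduct] using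
    hH.dotProduct_sub_le g.ofLp u.ofLp

theorem add_quadForm_le_of_isMinOn {Ω : Set (EuclideanSpace ℝ (Fin n))} (hΩ : Convex ℝ Ω)
    {H : Matrix (Fin n) (Fin n) ℝ} {g x x' y : EuclideanSpace ℝ (Fin n)} (hx' : x' ∈ Ω)
    (hy : y ∈ Ω) (hmin : IsMinOn (fun z => ⟪g, z⟫ + quadForm H (z - x)) Ω x') :
    ⟪g, x'⟫ + quadForm H (x' - x) + quadForm H (y - x') ≤ ⟪g, y⟫ + quadForm H (y - x) := by
  simp only [quadForm_eq_dotProduct, ← Matrix.toLinearMap₂'_apply'] at hmin ⊢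
  exact QuadraticMap.add_le_of_isMinOn hΩ (innerₗ _ g)
    (H.toQuadraticForm'.comp (WithLp.linearEquiv 2 ℝ (Fin n → ℝ)).toLinearMap) hx' hy hmin

theorem posDef_one_add_sum_smul_outer {ι : Type*} (s : Finset ι) {β : ι → ℝ}
    (hβ : ∀ i ∈ s, 0 ≤ β i) (g : ι → EuclideanSpace ℝ (Fin n)) :
    ((1 : Matrix (Fin n) (Fin n) ℝ) + ∑ i ∈ s, β i • outer (g i)).PosDef :=
  Matrix.PosDef.one.add_posSemidef <|
    Matrix.posSemidef_sum s fun i hi => (posSemidef_outer (g i)).smul (hβ i hi)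

theorem regret_step_le {Ω : Set (EuclideanSpace ℝ (Fin n))} (hΩ : Convex ℝ Ω)
    {H H' : Matrix (Fin n) (Fin n) ℝ} {b : ℝ} {φ : EuclideanSpace ℝ (Fin n) → ℝ}
    {g x x' xs : EuclideanSpace ℝ (Fin n)} (hH' : H' = H + b • outer g) (hpos : H'.PosDef)
    (hx' : x' ∈ Ω) (hxs : xs ∈ Ω)
    (hconv : φ x + ⟪g, xs - x⟫ + b * ⟪g, xs - x⟫ ^ 2 ≤ φ xs)
    (hmin : IsMinOn (fun z => ⟪g, z⟫ + quadForm H' (z - x)) Ω x') :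
    φ x - φ xs + quadForm H' (xs - x') ≤
      (1 / 4) * quadForm H'⁻¹ g + quadForm H (xs - x) := by
  have hprox := add_quadForm_le_of_isMinOn hΩ hx' hxs hmin
  have hyoung := hpos.inner_sub_quadForm_le g (-(x' - x))
  have hsplit : quadForm H' (xs - x) = quadForm H (xs - x) + b * ⟪g, xs - x⟫ ^ 2 := by
    rw [hH', quadForm_add_left, quadForm_smul_outer]
  rw [quadForm_neg, inner_neg_right] at hyoung
  simp only [inner_sub_right] at hconv hyoung hsplit
  linarith

end quadForm

theorem stmt_16_general {n T : ℕ}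
    (Ω : Set (EuclideanSpace ℝ (Fin n))) (hΩ : Convex ℝ Ω)
    (β : ℕ → ℝ) (hβ : ∀ t ∈ Finset.Icc 1 T, 0 ≤ β t)
    (f : ℕ → EuclideanSpace ℝ (Fin n) → ℝ)
    (x g : ℕ → EuclideanSpace ℝ (Fin n))
    (hx : ∀ t ∈ Finset.Icc 1 (T+1), x t ∈ Ω)
    (hβconv : ∀ t ∈ Finset.Icc 1 T, ∀ y ∈ Ω,
      f t (x t) + ⟪g t, y - x t⟫ + β t * ⟪g t, y - x t⟫^2 ≤ f t y)
    (hnext : ∀ t ∈ Finset.Icc 1 T, IsMinOn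
      (fun z => ⟪g t, z⟫ +
        quadForm ((1 : Matrix (Fin n) (Fin n) ℝ)
          + ∑ s ∈ Finset.Icc 1 t, β s • outer (g s)) (z - x t)) Ω (x (t+1))) :
    ∀ xs ∈ Ω,
      ∑ t ∈ Finset.Icc 1 T, (f t (x t) - f t xs) ≤
        (1/4) * ∑ t ∈ Finset.Icc 1 T,
          quadForm ((1 : Matrix (Fin n) (Fin n) ℝ)
            + ∑ s ∈ Finset.Icc 1 t, β s • outer (g s))⁻¹ (g t)
        + ‖xs - x 1‖^2 := by
  intro xs hxs
  set H : ℕ → Matrix (Fin n) (Fin n) ℝ := fun t => 1 + ∑ s ∈ Icc 1 t, β s • outer (g s)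
  have hpos : ∀ t ≤ T, (H t).PosDef := fun t ht =>
    posDef_one_add_sum_smul_outer _ (fun s hs => hβ s (Icc_subset_Icc_right ht hs)) g
  have hstep : ∀ t < T,
      f (t + 1) (x (t + 1)) - f (t + 1) xs + quadForm (H (t + 1)) (xs - x (t + 2)) ≤
        (1 / 4) * quadForm (H (t + 1))⁻¹ (g (t + 1)) + quadForm (H t) (xs - x (t + 1)) := by
    intro t ht
    have ht' : t + 1 ∈ Icc 1 T := mem_Icc.mpr ⟨Nat.le_add_left 1 t, ht⟩
    refine regret_step_le hΩ ?_ (hpos _ ht) (hx _ (mem_Icc.mpr ⟨by omega, by omega⟩)) hxs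
      (hβconv _ ht' xs hxs) (hnext _ ht')
    simp only [H, sum_Icc_succ_top (Nat.le_add_left 1 t), add_assoc]
  have htele := sum_Icc_add_le_sum_Icc_add (a := fun t => f t (x t) - f t xs)
    (b := fun t => (1 / 4) * quadForm (H t)⁻¹ (g t))
    (D := fun t => quadForm (H t) (xs - x (t + 1))) hstep
  have hlast := quadForm_nonneg (hpos T le_rfl).posSemidef (xs - x (T + 1))
  have hfirst : quadForm (H 0) (xs - x 1) = ‖xs - x 1‖ ^ 2 := by simp [H, quadForm_one]
  rw [mul_sum]
  linarith

theorem stmt_16 {n T : ℕ} (hT : 1 ≤ T)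
    (Ω : Set (EuclideanSpace ℝ (Fin n))) (hΩ : Convex ℝ Ω)
    (β : ℕ → ℝ) (hβ : ∀ t ∈ Finset.Icc 1 T, 0 ≤ β t)
    (f : ℕ → EuclideanSpace ℝ (Fin n) → ℝ)
    (x g : ℕ → EuclideanSpace ℝ (Fin n))
    (hx : ∀ t ∈ Finset.Icc 1 (T+1), x t ∈ Ω)
    (hβconv : ∀ t ∈ Finset.Icc 1 T, ∀ y ∈ Ω,
      f t (x t) + ⟪g t, y - x t⟫ + β t * ⟪g t, y - x t⟫^2 ≤ f t y)
    (hnext : ∀ t ∈ Finset.Icc 1 T, IsMinOn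
      (fun z => ⟪g t, z⟫ +
        quadForm ((1 : Matrix (Fin n) (Fin n) ℝ)
          + ∑ s ∈ Finset.Icc 1 t, β s • outer (g s)) (z - x t)) Ω (x (t+1))) :
    ∀ xs ∈ Ω,
      ∑ t ∈ Finset.Icc 1 T, (f t (x t) - f t xs) ≤
        (1/4) * ∑ t ∈ Finset.Icc 1 T,
          quadForm ((1 : Matrix (Fin n) (Fin n) ℝ)
            + ∑ s ∈ Finset.Icc 1 t, β s • outer (g s))⁻¹ (g t)
        + ‖xs - x 1‖^2 :=
  stmt_16_general Ω hΩ β hβ f x g hx hβconv hnext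
end

section
/- Let n ≥ 1 and let a_1, …, a_n be nonnegative real numbers. Then ∑_{i=1}^n a_i / sqrt(∑_{j=1}^i a_j) ≤ 2·sqrt(∑_{i=1}^n a_i), with the convention that a term a_i / sqrt(∑_{j=1}^i a_j) is 0 whenever ∑_{j=1}^i a_j = 0 (which forces a_i = 0). -/
/-!
Each term is bounded by a telescoping difference: with `s` the previous partial sum,
`a / √(s + a) ≤ 2 (√(s + a) - √s)`, because `a = (√(s + a) - √s)(√(s + a) + √s)` and
`√(s + a) + √s ≤ 2 √(s + a)`. Summing gives `2 √(∑ a)`.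
-/

open Finset

lemma div_sqrt_add_le_two_mul_sqrt_sub {s a : ℝ} (hs : 0 ≤ s) (ha : 0 ≤ a) :
    a / √(s + a) ≤ 2 * (√(s + a) - √s) := by
  rcases (add_nonneg hs ha).eq_or_lt with h | h
  · rw [← h, Real.sqrt_zero, div_zero]
    have hs0 : s = 0 := by linarith
    simp [hs0]
  · have hsqrt_pos : 0 < √(s + a) := Real.sqrt_pos.mpr h
    have hsqrt_mono : √s ≤ √(s + a) := Real.sqrt_le_sqrt (by linarith)
    rw [div_le_iff₀ hsqrt_pos]
    nlinarith [Real.sq_sqrt hs, Real.sq_sqrt h.le, Real.sqrt_nonneg s]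

theorem stmt_17_general (n : ℕ) (a : ℕ → ℝ)
    (ha : ∀ i ∈ Finset.Icc 1 n, 0 ≤ a i) :
    ∑ i ∈ Finset.Icc 1 n, a i / Real.sqrt (∑ j ∈ Finset.Icc 1 i, a j) ≤
      2 * Real.sqrt (∑ i ∈ Finset.Icc 1 n, a i) := by
  induction n with
  | zero => simp
  | succ n ih =>
    have ha' : ∀ i ∈ Icc 1 n, 0 ≤ a i := fun i hi =>
      ha i (Icc_subset_Icc_right n.le_succ hi)
    have hlast : 0 ≤ a (n + 1) := ha (n + 1) (by simp)
    have hstep := div_sqrt_add_le_two_mul_sqrt_sub (sum_nonneg ha') hlast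
    rw [sum_Icc_succ_top (by omega), sum_Icc_succ_top (by omega)]
    linarith [ih ha']

theorem stmt_17 (n : ℕ) (hn : 1 ≤ n) (a : ℕ → ℝ)
    (ha : ∀ i ∈ Finset.Icc 1 n, 0 ≤ a i) :
    ∑ i ∈ Finset.Icc 1 n, a i / Real.sqrt (∑ j ∈ Finset.Icc 1 i, a j) ≤
      2 * Real.sqrt (∑ i ∈ Finset.Icc 1 n, a i) :=
  stmt_17_general n a ha
end
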